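/- Suppose condition (N_est) holds with parameter M > 0 and n is large enough that η₁ n/(2N) ≥ 8. Then almost surely TSPC_n ≤ (Σ_{l=1}^N T_l + 2N(s_n + 8r_n))·1(U_tot) + 5√n·1(U_tot^c), where U_tot = ∩_{l=1}^N U_l. -/

import Mathlib

/-!
Almost surely every sample point lies in a city. Off `U_tot` it suffices to bound the TSP length of
at most `n` points of the unit square: sort them into horizontal strips of height `n^{-1/2}`,
left to right within a strip; every step of this tour costs at most the increase of the potential
`x + 3⌊√n y⌋` plus the strip height, which telescopes to `3√n + 2 + (n - 1)/√n ≤ 5√n`.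

On `U_tot` every city is occupied. Take tours of the cities that are optimal up to `2 r_n` and
splice them together while exploring the connected set of cities: each new city is inserted into
the current tour next to an adjacent city already visited, at a cost of at most twice the distance
`s_n + 2 r_n` between points of adjacent cities (`dist` on `ℝ × ℝ` is the max metric). The cities
are disjoint, so the result is a tour of the sample, of length at most
`∑ (T_l + 2 r_n) + 2 (N - 1) (s_n + 2 r_n)`.
-/

open MeasureTheory ProbabilityTheory Filter Finset
open scoped ENNReal Classical

noncomputable section

/-- Length of the closed tour visiting the points of `l` in cyclic order. -/
def tourLength (l : List (ℝ × ℝ)) : ℝ :=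
  ((l.zip (l.rotate 1)).map fun p => dist p.1 p.2).sum

/-- TSP length of a finite set of points in the plane: the minimum over spanning cycles
(cyclic orderings of the points) of the total edge length; `0` if there are at most
two points. -/
def tspLength (P : Finset (ℝ × ℝ)) : ℝ :=
  if P.card ≤ 2 then 0
  else sInf {L : ℝ | ∃ l : List (ℝ × ℝ), l.Nodup ∧ l.toFinset = P ∧ L = tourLength l}

/-- Axis-parallel square with lower-left corner `c` and side length `r`. -/
def square (c : ℝ × ℝ) (r : ℝ) : Set (ℝ × ℝ) := Set.Icc c (c.1 + r, c.2 + r)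

def unitSquare : Set (ℝ × ℝ) := square (0, 0) 1

/-- A set of lattice points is connected for nearest-neighbour adjacency. -/
def latticeConnected (A : Set (ℤ × ℤ)) : Prop :=
  ∀ a ∈ A, ∀ b ∈ A,
    Relation.ReflTransGen
      (fun u v => u ∈ A ∧ v ∈ A ∧ |u.1 - v.1| + |u.2 - v.2| = 1) a b


def pathLength : List (ℝ × ℝ) → ℝ
  | a :: b :: t => dist a b + pathLength (b :: t)
  | _ => 0

@[simp] lemma pathLength_nil : pathLength [] = 0 := rfl

@[simp] lemma pathLength_singleton (a : ℝ × ℝ) : pathLength [a] = 0 := rfl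

@[simp] lemma pathLength_cons_cons (a b : ℝ × ℝ) (t : List (ℝ × ℝ)) :
    pathLength (a :: b :: t) = dist a b + pathLength (b :: t) := rfl

lemma pathLength_append_cons (u v : List (ℝ × ℝ)) (a : ℝ × ℝ) :
    pathLength (u ++ a :: v) = pathLength (u ++ [a]) + pathLength (a :: v) := by
  induction u with
  | nil => simp
  | cons b u ih =>
    cases u with
    | nil => simp
    | cons c u =>
      simp only [List.cons_append, pathLength_cons_cons] at ih ⊢
      rw [ih, add_assoc]

lemma pathLength_append_le_append_cons (u v : List (ℝ × ℝ)) (a : ℝ × ℝ) :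
    pathLength (u ++ v) ≤ pathLength (u ++ a :: v) := by
  induction u with
  | nil => cases v <;> simp
  | cons b u ih =>
    cases u with
    | nil =>
      cases v with
      | nil => simp
      | cons c v =>
        simp only [List.nil_append, List.cons_append, pathLength_cons_cons]
        linarith [dist_triangle b a c]
    | cons c u => simpa using ih

lemma pathLength_concat_le {D : ℝ} {a b : ℝ × ℝ} {u : List (ℝ × ℝ)}
    (hD : ∀ x ∈ b :: u, dist x a ≤ D) : pathLength (b :: u ++ [a]) ≤ pathLength (b :: u) + D := by
  induction u generalizing b with
  | nil => simpa using hD b (by simp)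
  | cons c u ih =>
    have := ih fun x hx => hD x (List.mem_cons_of_mem b hx)
    simp only [List.cons_append, pathLength_cons_cons] at this ⊢
    linarith

lemma pathLength_add_le_of_isChain {f : ℝ × ℝ → ℝ} {B c : ℝ} {a : ℝ × ℝ} {t : List (ℝ × ℝ)}
    (hB : ∀ p ∈ a :: t, f p ≤ B)
    (h : List.IsChain (fun p q => dist p q ≤ f q - f p + c) (a :: t)) :
    pathLength (a :: t) + f a ≤ B + t.length * c := by
  induction t generalizing a with
  | nil => simpa using hB a (by simp)
  | cons b t ih =>
    rw [List.isChain_cons_cons] at h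
    have := ih (fun p hp => hB p (List.mem_cons_of_mem a hp)) h.2
    simp only [pathLength_cons_cons, List.length_cons, Nat.cast_succ]
    linarith [h.1]

lemma tourLength_cons (a : ℝ × ℝ) (t : List (ℝ × ℝ)) :
    tourLength (a :: t) = pathLength (a :: t ++ [a]) := by
  have key : ∀ (b : ℝ × ℝ) (t : List (ℝ × ℝ)),
      (((b :: t).zip (t ++ [a])).map fun p => dist p.1 p.2).sum = pathLength (b :: t ++ [a]) := by
    intro b t
    induction t generalizing b with
    | nil => simp
    | cons c t ih => simp [ih]
  rw [tourLength, List.rotate_cons_succ, List.rotate_zero, key]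

lemma tourLength_append_comm (u v : List (ℝ × ℝ)) : tourLength (u ++ v) = tourLength (v ++ u) := by
  rcases u with _ | ⟨a, u⟩
  · simp
  rcases v with _ | ⟨b, v⟩
  · simp
  simp only [List.cons_append, List.append_assoc, tourLength_cons]
  show pathLength ((a :: u) ++ b :: (v ++ [a])) = pathLength ((b :: v) ++ a :: (u ++ [b]))
  rw [pathLength_append_cons (a :: u), pathLength_append_cons (b :: v), add_comm]
  simp

lemma tourLength_cons_cons_append_le (x y : ℝ × ℝ) (k j : List (ℝ × ℝ)) :
    tourLength (x :: y :: (k ++ j)) ≤ tourLength (x :: j) + tourLength (y :: k) + 2 * dist x y := by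
  have detour := pathLength_append_le_append_cons (y :: k) (j ++ [x]) y
  have shortcut := pathLength_append_le_append_cons [y] (j ++ [x]) x
  rw [pathLength_append_cons] at detour
  simp only [tourLength_cons, List.cons_append, List.nil_append, List.append_assoc,
    pathLength_cons_cons] at detour shortcut ⊢
  linarith [dist_comm x y]

lemma exists_perm_tourLength_le {l m : List (ℝ × ℝ)} {x y : ℝ × ℝ} (hx : x ∈ l) (hy : y ∈ m) :
    ∃ l', l'.Perm (l ++ m) ∧ tourLength l' ≤ tourLength l + tourLength m + 2 * dist x y := by
  obtain ⟨A, B, rfl⟩ := List.append_of_mem hx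
  obtain ⟨C, D, rfl⟩ := List.append_of_mem hy
  refine ⟨x :: y :: (D ++ C ++ (B ++ A)), ?_, ?_⟩
  · refine List.perm_iff_count.2 fun p => ?_
    simp only [List.count_cons, List.count_append]
    omega
  · rw [tourLength_append_comm A, tourLength_append_comm C]
    exact tourLength_cons_cons_append_le x y _ _

lemma tourLength_nonneg (l : List (ℝ × ℝ)) : 0 ≤ tourLength l :=
  List.sum_nonneg fun _ hx => by
    obtain ⟨p, -, rfl⟩ := List.mem_map.1 hx
    exact dist_nonneg

lemma tourLength_le_length_mul {l : List (ℝ × ℝ)} {ρ : ℝ}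
    (hρ : ∀ x ∈ l, ∀ y ∈ l, dist x y ≤ ρ) : tourLength l ≤ l.length * ρ := by
  have := List.sum_le_card_nsmul ((l.zip (l.rotate 1)).map fun p => dist p.1 p.2) ρ (by
    intro d hd
    obtain ⟨⟨p, q⟩, hpq, rfl⟩ := List.mem_map.1 hd
    obtain ⟨hp, hq⟩ := List.of_mem_zip hpq
    exact hρ p hp q (List.mem_rotate.1 hq))
  simpa [tourLength] using this

lemma tspLength_le_tourLength {l : List (ℝ × ℝ)} (hl : l.Nodup) :
    tspLength l.toFinset ≤ tourLength l := by
  rw [tspLength]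
  split_ifs
  · exact tourLength_nonneg l
  · refine csInf_le ⟨0, ?_⟩ ⟨l, hl, rfl, rfl⟩
    rintro _ ⟨l', -, -, rfl⟩
    exact tourLength_nonneg l'

lemma exists_tour_le_tspLength_add (P : Finset (ℝ × ℝ)) {ρ : ℝ} (hρ : 0 < ρ)
    (hP : ∀ x ∈ P, ∀ y ∈ P, dist x y ≤ ρ) :
    ∃ l : List (ℝ × ℝ), l.Nodup ∧ l.toFinset = P ∧ tourLength l ≤ tspLength P + 2 * ρ := by
  by_cases hcard : P.card ≤ 2
  · -- here `tspLength P = 0` by convention, while the tour has length up to `2 * ρ`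
    refine ⟨P.toList, P.nodup_toList, P.toList_toFinset, ?_⟩
    have := tourLength_le_length_mul (l := P.toList) (ρ := ρ) (by simpa using hP)
    rw [tspLength, if_pos hcard, Finset.length_toList] at *
    have : (P.card : ℝ) ≤ 2 := by exact_mod_cast hcard
    nlinarith
  · have hne : {L : ℝ | ∃ l : List (ℝ × ℝ), l.Nodup ∧ l.toFinset = P ∧ L = tourLength l}.Nonempty :=
      ⟨_, P.toList, P.nodup_toList, P.toList_toFinset, rfl⟩
    obtain ⟨_, ⟨l, hl, hlP, rfl⟩, hlt⟩ := Real.lt_sInf_add_pos hne (by positivity : 0 < 2 * ρ)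
    refine ⟨l, hl, hlP, ?_⟩
    rw [tspLength, if_neg hcard]
    exact hlt.le

lemma square_eq_prod (c : ℝ × ℝ) (ρ : ℝ) :
    square c ρ = Set.Icc c.1 (c.1 + ρ) ×ˢ Set.Icc c.2 (c.2 + ρ) :=
  Set.Icc_prod_eq _ _

lemma dist_le_of_mem_square {c x y : ℝ × ℝ} {ρ : ℝ} (hx : x ∈ square c ρ) (hy : y ∈ square c ρ) :
    dist x y ≤ ρ := by
  rw [square_eq_prod] at hx hy
  rw [Prod.dist_eq]
  refine max_le ?_ ?_
  · exact (Real.dist_le_of_mem_Icc hx.1 hy.1).trans_eq (by ring)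
  · exact (Real.dist_le_of_mem_Icc hx.2 hy.2).trans_eq (by ring)

/-- Sort key and potential of the strip tour: horizontal strips of height `κ⁻¹`, each crossed
from left to right. -/
def stripPotential (κ : ℝ) (p : ℝ × ℝ) : ℝ := p.1 + 3 * ⌊κ * p.2⌋

lemma stripPotential_nonneg {κ : ℝ} {p : ℝ × ℝ} (hκ : 0 ≤ κ) (hp : p ∈ unitSquare) :
    0 ≤ stripPotential κ p := by
  rw [unitSquare, square_eq_prod] at hp
  have : (0 : ℝ) ≤ ⌊κ * p.2⌋ := by exact_mod_cast Int.floor_nonneg.2 (by nlinarith [hp.2.1])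
  unfold stripPotential
  linarith [hp.1.1]

lemma stripPotential_le {κ : ℝ} {p : ℝ × ℝ} (hκ : 0 ≤ κ) (hp : p ∈ unitSquare) :
    stripPotential κ p ≤ 1 + 3 * κ := by
  rw [unitSquare, square_eq_prod] at hp
  have := Int.floor_le (κ * p.2)
  unfold stripPotential
  nlinarith [hp.1.2, hp.2.2]

lemma dist_le_stripPotential_sub {κ : ℝ} (hκ : 0 < κ) {p q : ℝ × ℝ} (hp : p ∈ unitSquare)
    (hq : q ∈ unitSquare) (hpq : stripPotential κ p ≤ stripPotential κ q) :
    dist p q ≤ stripPotential κ q - stripPotential κ p + κ⁻¹ := by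
  have hdist := dist_le_of_mem_square hp hq
  rw [unitSquare, square_eq_prod] at hp hq
  have hκinv : 0 < κ⁻¹ := inv_pos.2 hκ
  unfold stripPotential at hpq ⊢
  have hpi := Int.floor_le (κ * p.2)
  have hpi' := Int.lt_floor_add_one (κ * p.2)
  have hqj := Int.floor_le (κ * q.2)
  have hqj' := Int.lt_floor_add_one (κ * q.2)
  set i := ⌊κ * p.2⌋
  set j := ⌊κ * q.2⌋
  have hij : i ≤ j := by
    by_contra! hji
    have : (j : ℝ) + 1 ≤ i := by exact_mod_cast hji
    linarith [hp.1.1, hq.1.2]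
  rcases hij.eq_or_lt with hij | hij
  · have hij : (i : ℝ) = j := by exact_mod_cast hij
    rw [hij] at hpq hpi hpi' ⊢
    have hy : |p.2 - q.2| ≤ κ⁻¹ := by
      rw [← one_div, le_div_iff₀ hκ, ← abs_of_pos hκ, ← abs_mul, abs_le]
      constructor <;> linarith
    rw [Prod.dist_eq, Real.dist_eq, Real.dist_eq, abs_sub_comm p.1, abs_of_nonneg (by linarith)]
    exact max_le (by linarith) (by linarith)
  · -- a change of strip raises the potential by at least `3 - 1`, more than any step costs
    have : (i : ℝ) + 1 ≤ j := by exact_mod_cast hij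
    linarith [hp.1.2, hq.1.1]

theorem tspLength_le_of_forall_mem_unitSquare {P : Finset (ℝ × ℝ)} (hP : P.Nonempty)
    (hPU : ∀ p ∈ P, p ∈ unitSquare) {κ : ℝ} (hκ : 0 < κ) :
    tspLength P ≤ 3 * κ + 2 + (P.card - 1) / κ := by
  set l := P.toList.mergeSort fun p q => decide (stripPotential κ p ≤ stripPotential κ q)
  have hperm : l.Perm P.toList := List.mergeSort_perm _ _
  have hlP : l.toFinset = P := by rw [List.toFinset_eq_of_perm _ _ hperm, Finset.toList_toFinset]
  have hmem : ∀ p ∈ l, p ∈ unitSquare := fun p hp => hPU p (by simpa using hperm.subset hp)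
  have hsorted : l.Pairwise fun p q => stripPotential κ p ≤ stripPotential κ q := by
    simpa using List.pairwise_mergeSort
      (le := fun p q => decide (stripPotential κ p ≤ stripPotential κ q))
      (fun a b c hab hbc => by simp only [decide_eq_true_eq] at *; linarith)
      (fun a b => by simpa using le_total _ _) P.toList
  obtain ⟨a, t, hl⟩ : ∃ a t, l = a :: t := List.exists_cons_of_ne_nil (by
    simpa [← List.length_pos_iff, hperm.length_eq] using hP)
  rw [hl] at hperm hlP hmem hsorted
  have hchain : List.IsChain (fun p q => dist p q ≤ stripPotential κ q - stripPotential κ p + κ⁻¹)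
      (a :: t) :=
    (hsorted.imp_of_mem fun hp hq hpq => dist_le_stripPotential_sub hκ (hmem _ hp) (hmem _ hq)
      hpq).isChain
  have hpath := pathLength_add_le_of_isChain (fun p hp => stripPotential_le hκ.le (hmem p hp))
    hchain
  have hclose := pathLength_concat_le (a := a) fun x hx =>
    dist_le_of_mem_square (hmem x hx) (hmem a (by simp))
  have hlen : (t.length : ℝ) = P.card - 1 := by
    rw [← Finset.length_toList, ← hperm.length_eq]; simp
  calc tspLength P ≤ tourLength (a :: t) := hlP ▸ tspLength_le_tourLength
        (hperm.nodup_iff.2 P.nodup_toList)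
    _ ≤ 3 * κ + 2 + (P.card - 1) / κ := by
      rw [tourLength_cons, ← hlen, div_eq_mul_inv]
      linarith [stripPotential_nonneg hκ.le (hmem a (by simp))]

theorem tspLength_le_five_sqrt {P : Finset (ℝ × ℝ)} (hPU : ∀ p ∈ P, p ∈ unitSquare) {n : ℕ}
    (hcard : P.card ≤ n) : tspLength P ≤ 5 * Real.sqrt n := by
  rcases P.eq_empty_or_nonempty with rfl | hP
  · simp [tspLength]
  have hn : (1 : ℝ) ≤ n := by exact_mod_cast hP.card_pos.trans_le hcard
  have hs : 1 ≤ Real.sqrt n := Real.one_le_sqrt.2 hn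
  have hsq := Real.sq_sqrt (show (0 : ℝ) ≤ n by linarith)
  have hcard' : (P.card : ℝ) ≤ n := by exact_mod_cast hcard
  have hs0 : 0 < Real.sqrt n := by linarith
  have key : ((n : ℝ) - 1) / Real.sqrt n ≤ 2 * Real.sqrt n - 2 := by
    rw [div_le_iff₀ hs0]
    nlinarith [sq_nonneg (Real.sqrt n - 1)]
  have : ((P.card : ℝ) - 1) / Real.sqrt n ≤ ((n : ℝ) - 1) / Real.sqrt n := by gcongr
  linarith [tspLength_le_of_forall_mem_unitSquare hP hPU hs0]

lemma Relation.ReflTransGen.exists_mem_notMem {α : Type*} {r : α → α → Prop} {S : Set α}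
    {a b : α} (h : Relation.ReflTransGen r a b) (ha : a ∈ S) (hb : b ∉ S) :
    ∃ u ∈ S, ∃ v ∉ S, r u v := by
  by_contra! hS
  refine hb ?_
  clear hb
  induction h with
  | refl => exact ha
  | tail _ hcd ih => exact not_not.1 fun hd => hS _ ih _ hd hcd

section Gluing

variable {V : Type*} [DecidableEq V] (w : V → List (ℝ × ℝ))

lemma exists_tour_insert_le {S : Finset V} {l : List (ℝ × ℝ)}
    (hl : (l : Multiset (ℝ × ℝ)) = S.val.bind fun a => (w a : Multiset (ℝ × ℝ)))
    {u v : V} (hu : u ∈ S) (hv : v ∉ S) {x y : ℝ × ℝ} (hx : x ∈ w u) (hy : y ∈ w v) :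
    ∃ l' : List (ℝ × ℝ),
      (l' : Multiset (ℝ × ℝ)) = (insert v S).val.bind (fun a => (w a : Multiset (ℝ × ℝ))) ∧
      tourLength l' ≤ tourLength l + tourLength (w v) + 2 * dist x y := by
  have hxl : x ∈ l := by
    rw [← Multiset.mem_coe, hl, Multiset.mem_bind]
    exact ⟨u, hu, hx⟩
  obtain ⟨l', hperm, hle⟩ := exists_perm_tourLength_le hxl hy
  refine ⟨l', ?_, hle⟩
  rw [Multiset.coe_eq_coe.2 hperm, ← Multiset.coe_add, hl, Finset.insert_val_of_notMem hv,
    Multiset.cons_bind, add_comm]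

theorem exists_tour_bind_le {G : V → V → Prop} {A : Finset V}
    (hconn : ∀ a ∈ A, ∀ b ∈ A, Relation.ReflTransGen (fun u v => u ∈ A ∧ v ∈ A ∧ G u v) a b)
    (hA : A.Nonempty) (hw : ∀ a ∈ A, w a ≠ []) {c : ℝ}
    (hc : ∀ a ∈ A, ∀ b ∈ A, G a b → ∀ x ∈ w a, ∀ y ∈ w b, dist x y ≤ c) :
    ∃ l : List (ℝ × ℝ), (l : Multiset (ℝ × ℝ)) = A.val.bind (fun a => (w a : Multiset (ℝ × ℝ))) ∧
      tourLength l ≤ ∑ a ∈ A, tourLength (w a) + 2 * (A.card - 1) * c := by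
  obtain ⟨a₀, ha₀⟩ := hA
  have hAcard : 0 < A.card := Finset.card_pos.2 ⟨a₀, ha₀⟩
  have grow : ∀ k < A.card, ∃ S ⊆ A, S.card = k + 1 ∧ ∃ l : List (ℝ × ℝ),
      (l : Multiset (ℝ × ℝ)) = S.val.bind (fun a => (w a : Multiset (ℝ × ℝ))) ∧
      tourLength l ≤ ∑ a ∈ S, tourLength (w a) + 2 * k * c := by
    intro k
    induction k with
    | zero => exact fun _ => ⟨{a₀}, by simpa using ha₀, rfl, w a₀, by simp, by simp⟩
    | succ k ih =>
      intro hk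
      obtain ⟨S, hSA, hScard, l, hl, hle⟩ := ih (by omega)
      obtain ⟨b, hbA, hbS⟩ := Finset.exists_mem_notMem_of_card_lt_card (by omega : S.card < A.card)
      obtain ⟨a, ha⟩ := Finset.card_pos.1 (by omega : 0 < S.card)
      obtain ⟨u, hu, v, hv, huA, hvA, huv⟩ :=
        (hconn a (hSA ha) b hbA).exists_mem_notMem (S := ↑S) ha hbS
      obtain ⟨x, hx⟩ := List.exists_mem_of_ne_nil _ (hw u huA)
      obtain ⟨y, hy⟩ := List.exists_mem_of_ne_nil _ (hw v hvA)
      obtain ⟨l', hl', hle'⟩ := exists_tour_insert_le w hl hu hv hx hy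
      refine ⟨insert v S, Finset.insert_subset hvA hSA, by rw [Finset.card_insert_of_notMem hv,
        hScard], l', hl', ?_⟩
      rw [Finset.sum_insert hv]
      push_cast
      linarith [hc u huA v hvA huv x hx y hy]
  obtain ⟨S, hSA, hScard, l, hl, hle⟩ := grow (A.card - 1) (by omega)
  obtain rfl : S = A := Finset.eq_of_subset_of_card_le hSA (by omega)
  refine ⟨l, hl, hle.trans_eq ?_⟩
  rw [Nat.cast_pred hAcard]

end Gluing

def latticeSquare (ρ σ : ℝ) (a : ℤ × ℤ) : Set (ℝ × ℝ) :=
  square ((ρ + σ) * a.1, (ρ + σ) * a.2) ρ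

lemma latticeSquare_eq_prod (ρ σ : ℝ) (a : ℤ × ℤ) : latticeSquare ρ σ a =
    Set.Icc ((ρ + σ) * a.1) ((ρ + σ) * a.1 + ρ) ×ˢ Set.Icc ((ρ + σ) * a.2) ((ρ + σ) * a.2 + ρ) :=
  square_eq_prod _ _

lemma dist_le_of_mem_Icc_mul_int {ρ σ : ℝ} (hρσ : 0 ≤ ρ + σ) {i j : ℤ} {x y : ℝ}
    (hx : x ∈ Set.Icc ((ρ + σ) * i) ((ρ + σ) * i + ρ))
    (hy : y ∈ Set.Icc ((ρ + σ) * j) ((ρ + σ) * j + ρ)) :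
    dist x y ≤ (ρ + σ) * |(i : ℝ) - j| + ρ := by
  have h₁ := mul_le_mul_of_nonneg_left (le_abs_self ((i : ℝ) - j)) hρσ
  have h₂ := mul_le_mul_of_nonneg_left (neg_abs_le ((i : ℝ) - j)) hρσ
  rw [Real.dist_eq, abs_sub_le_iff]
  constructor <;> nlinarith [hx.1, hx.2, hy.1, hy.2]

lemma disjoint_Icc_mul_int {ρ σ : ℝ} (hρ : 0 ≤ ρ) (hσ : 0 < σ) {i j : ℤ} (hij : i ≠ j) :
    Disjoint (Set.Icc ((ρ + σ) * i) ((ρ + σ) * i + ρ))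
      (Set.Icc ((ρ + σ) * j) ((ρ + σ) * j + ρ)) := by
  wlog h : i < j generalizing i j
  · exact (this hij.symm (hij.lt_or_gt.resolve_left h)).symm
  have : (i : ℝ) + 1 ≤ j := by exact_mod_cast h
  refine Set.disjoint_left.2 fun x hx hx' => ?_
  nlinarith [hx.2, hx'.1]

lemma disjoint_latticeSquare {ρ σ : ℝ} (hρ : 0 ≤ ρ) (hσ : 0 < σ) {a b : ℤ × ℤ} (hab : a ≠ b) :
    Disjoint (latticeSquare ρ σ a) (latticeSquare ρ σ b) := by
  rw [latticeSquare_eq_prod, latticeSquare_eq_prod, Set.disjoint_prod]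
  rcases not_and_or.1 (mt Prod.ext_iff.2 hab) with h | h
  · exact .inl (disjoint_Icc_mul_int hρ hσ h)
  · exact .inr (disjoint_Icc_mul_int hρ hσ h)

lemma dist_le_of_mem_latticeSquare_of_adj {ρ σ : ℝ} (hρ : 0 ≤ ρ) (hσ : 0 ≤ σ) {a b : ℤ × ℤ}
    (hab : |a.1 - b.1| + |a.2 - b.2| = 1) {x y : ℝ × ℝ} (hx : x ∈ latticeSquare ρ σ a)
    (hy : y ∈ latticeSquare ρ σ b) : dist x y ≤ σ + 2 * ρ := by
  have cast_abs_le_one : ∀ i j : ℤ, |i - j| ≤ 1 → |(i : ℝ) - j| ≤ 1 := fun i j h => by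
    exact_mod_cast h
  have h₁ := cast_abs_le_one a.1 b.1 (by linarith [abs_nonneg (a.2 - b.2)])
  have h₂ := cast_abs_le_one a.2 b.2 (by linarith [abs_nonneg (a.1 - b.1)])
  rw [latticeSquare_eq_prod] at hx hy
  rw [Prod.dist_eq]
  refine max_le ((dist_le_of_mem_Icc_mul_int (by linarith) hx.1 hy.1).trans ?_)
    ((dist_le_of_mem_Icc_mul_int (by linarith) hx.2 hy.2).trans ?_) <;> nlinarith

theorem tspLength_le_sum_tspLength_inter_latticeSquare {ι : Type*} [Fintype ι] [Nonempty ι]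
    {ρ σ : ℝ} (hρ : 0 < ρ) (hσ : 0 < σ) {z : ι → ℤ × ℤ} (hz : Function.Injective z)
    (hconn : latticeConnected (Set.range z)) {P : Finset (ℝ × ℝ)}
    (hP : ∀ x ∈ P, ∃ l, x ∈ latticeSquare ρ σ (z l))
    (hne : ∀ l, ∃ x ∈ P, x ∈ latticeSquare ρ σ (z l)) :
    tspLength P ≤ ∑ l, tspLength (P.filter fun x => x ∈ latticeSquare ρ σ (z l)) +
      2 * Fintype.card ι * (σ + 3 * ρ) := by
  set Q := fun a => P.filter fun x => x ∈ latticeSquare ρ σ a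
  choose w hwnd hwQ hwle using fun a => exists_tour_le_tspLength_add (Q a) hρ
    fun x hx y hy => dist_le_of_mem_square (mem_filter.1 hx).2 (mem_filter.1 hy).2
  have hmem_w : ∀ {a x}, x ∈ w a ↔ x ∈ P ∧ x ∈ latticeSquare ρ σ a := fun {a x} => by
    rw [← List.mem_toFinset, hwQ, mem_filter]
  set A := univ.image z
  have hA : (A : Set (ℤ × ℤ)) = Set.range z := by simp [A]
  obtain ⟨l, hl, hlen⟩ := exists_tour_bind_le w (A := A)
    (G := fun u v => |u.1 - v.1| + |u.2 - v.2| = 1) (by rw [← hA] at hconn; exact hconn)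
    (univ_nonempty.image z)
    (fun a ha => by
      obtain ⟨l, -, rfl⟩ := mem_image.1 ha
      obtain ⟨x, hx⟩ := hne l
      exact List.ne_nil_of_mem (hmem_w.2 hx))
    fun a _ b _ hab x hx y hy =>
      dist_le_of_mem_latticeSquare_of_adj hρ.le hσ.le hab (hmem_w.1 hx).2 (hmem_w.1 hy).2
  have hnodup : l.Nodup := by
    rw [← Multiset.coe_nodup, hl, Multiset.nodup_bind]
    refine ⟨fun a _ => hwnd a, A.nodup.pairwise fun a _ b _ hab => ?_⟩
    exact Multiset.disjoint_left.2 fun hx hx' => (disjoint_latticeSquare hρ.le hσ hab).ne_of_mem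
      (hmem_w.1 hx).2 (hmem_w.1 hx').2 rfl
  have hlP : l.toFinset = P := by
    ext x
    rw [List.mem_toFinset, ← Multiset.mem_coe, hl, Multiset.mem_bind]
    refine ⟨fun ⟨a, _, hx⟩ => (hmem_w.1 hx).1, fun hx => ?_⟩
    obtain ⟨l, hl⟩ := hP x hx
    exact ⟨z l, mem_image_of_mem z (mem_univ l), hmem_w.2 ⟨hx, hl⟩⟩
  have hcard : (A.card : ℝ) = Fintype.card ι := by
    rw [card_image_of_injective _ hz, card_univ]
  calc tspLength P ≤ tourLength l := hlP ▸ tspLength_le_tourLength hnodup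
    _ ≤ ∑ a ∈ A, (tspLength (Q a) + 2 * ρ) + 2 * Fintype.card ι * (σ + 2 * ρ) := by
      rw [hcard] at hlen
      have := sum_le_sum fun a (_ : a ∈ A) => hwle a
      nlinarith
    _ = ∑ l, tspLength (Q (z l)) + 2 * Fintype.card ι * (σ + 3 * ρ) := by
      rw [sum_image fun _ _ _ _ h => hz h, sum_add_distrib, sum_const, card_univ, nsmul_eq_mul]
      ring

lemma ae_mem_of_map_eq_withDensity_restrict {Ω α : Type*} [MeasurableSpace Ω] [MeasurableSpace α]
    {μ : Measure Ω} {ν : Measure α} {X : Ω → α} {s : Set α} {g : α → ℝ≥0∞}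
    (hX : AEMeasurable X μ) (hs : MeasurableSet s) (h : μ.map X = (ν.restrict s).withDensity g) :
    ∀ᵐ ω ∂μ, X ω ∈ s :=
  ae_of_ae_map hX (h ▸ (withDensity_absolutelyContinuous _ _).ae_le (ae_restrict_mem hs))

theorem tspc_upper_bound_by_city_sums_general
    (Ω : Type) [MeasurableSpace Ω] (Pr : Measure Ω)
    (ε₁ ε₂ : ℝ)
    (f : ℝ × ℝ → ℝ)
    (r s : ℕ → ℝ) (Nc : ℕ → ℕ)
    (hr : ∀ n, 0 < r n) (hs : ∀ n, 0 < s n)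
    (z : ∀ n : ℕ, Fin (Nc n) → ℤ × ℤ)
    (hzinj : ∀ n, Function.Injective (z n))
    (city : ∀ n : ℕ, Fin (Nc n) → Set (ℝ × ℝ))
    (hcity : ∀ n l, city n l =
      square ((r n + s n) * ((z n l).1 : ℝ), (r n + s n) * ((z n l).2 : ℝ)) (r n))
    (hsub : ∀ n l, city n l ⊆ unitSquare)
    (hconn : ∀ n, latticeConnected (Set.range (z n)))
    (X : (n : ℕ) → Fin n → Ω → ℝ × ℝ)
    (hXm : ∀ n i, Measurable (X n i))
    (hlaw : ∀ n i, Measure.map (X n i) Pr =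
      (volume.restrict (⋃ l, city n l)).withDensity
        fun x => ENNReal.ofReal (f x / ∫ y in (⋃ l, city n l), f y))
    (TSPC : (n : ℕ) → Ω → ℝ)
    (hTSPC : ∀ n ω, TSPC n ω = tspLength (Finset.univ.image fun i : Fin n => X n i ω))
    (b : ℕ → ℝ)
    (T : (n : ℕ) → Fin (Nc n) → Ω → ℝ)
    (hT : ∀ n l ω, T n l ω = tspLength
      ((Finset.univ.image fun i : Fin n => X n i ω).filter (fun p => p ∈ city n l)))
    (Ncount : (n : ℕ) → Fin (Nc n) → Ω → ℕ)
    (hNcount : ∀ n l ω, Ncount n l ω =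
      (Finset.univ.filter fun i : Fin n => X n i ω ∈ city n l).card)
    (U : (n : ℕ) → Fin (Nc n) → Set Ω)
    (hU : ∀ n l, U n l = {ω |
      ε₁ / ε₂ * n / (2 * Nc n) ≤ (Ncount n l ω : ℝ) ∧
      (Ncount n l ω : ℝ) ≤ 2 * (ε₂ / ε₁) * n / Nc n}) :
    ∀ M : ℝ, 0 < M →
      ((∀ n : ℕ, M * Real.log n / n ≤ r n ^ 2) ∧
        Tendsto (fun n : ℕ => (n : ℝ) / (Nc n : ℝ) ^ 2) atTop (nhds 0) ∧
        Tendsto (fun n : ℕ => (Nc n : ℝ) * s n / b n) atTop (nhds 0)) →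
      ∀ n : ℕ, 8 ≤ ε₁ / ε₂ * n / (2 * Nc n) →
        ∀ᵐ ω ∂Pr, TSPC n ω ≤
          if ω ∈ ⋂ l, U n l then
            (∑ l : Fin (Nc n), T n l ω) + 2 * (Nc n : ℝ) * (s n + 8 * r n)
          else 5 * Real.sqrt n := by
  intro M _ _ n h8
  have hN : 0 < Nc n := Nat.pos_of_ne_zero fun h => by norm_num [h] at h8
  have _ : Nonempty (Fin (Nc n)) := ⟨⟨0, hN⟩⟩
  have hmeas : MeasurableSet (⋃ l, city n l) :=
    .iUnion fun l => hcity n l ▸ measurableSet_Icc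
  filter_upwards [ae_all_iff.2 fun i => ae_mem_of_map_eq_withDensity_restrict
    (hXm n i).aemeasurable hmeas (hlaw n i)] with ω hω
  rw [hTSPC]
  split_ifs with hωU
  · have hne : ∀ l, ∃ x ∈ univ.image fun i => X n i ω, x ∈ city n l := fun l => by
      have hl : 8 ≤ (Ncount n l ω : ℝ) := h8.trans (hU n l ▸ Set.mem_iInter.1 hωU l).1
      have hpos : 0 < Ncount n l ω := Nat.cast_pos.1 (by linarith : (0 : ℝ) < Ncount n l ω)
      obtain ⟨i, hi⟩ := card_pos.1 (hNcount n l ω ▸ hpos)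
      exact ⟨X n i ω, mem_image_of_mem _ (mem_univ i), (mem_filter.1 hi).2⟩
    have hcity' : ∀ l, city n l = latticeSquare (r n) (s n) (z n l) := hcity n
    simp only [hcity'] at hω hne
    simp only [hT, hcity']
    refine (tspLength_le_sum_tspLength_inter_latticeSquare (hr n) (hs n) (hzinj n) (hconn n)
      (fun x hx => ?_) hne).trans ?_
    · obtain ⟨i, -, rfl⟩ := mem_image.1 hx
      exact Set.mem_iUnion.1 (hω i)
    · have hrn := hr n
      simp only [Fintype.card_fin]
      gcongr
      norm_num
  · refine tspLength_le_five_sqrt (fun p hp => ?_) (card_image_le.trans (by simp))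
    obtain ⟨i, -, rfl⟩ := mem_image.1 hp
    obtain ⟨l, hl⟩ := Set.mem_iUnion.1 (hω i)
    exact hsub n l hl

/-- Lemma 5, (3.1): upper bound for `TSPC_n` by the sum of the in-city
TSP lengths plus a crossing cost, on the event `U_tot`, and by `5 sqrt n` otherwise. -/
theorem tspc_upper_bound_by_city_sums
    (Ω : Type) [MeasurableSpace Ω] (Pr : Measure Ω) [IsProbabilityMeasure Pr]
    (ε₁ ε₂ : ℝ) (hε₁ : 0 < ε₁) (hε₁₂ : ε₁ ≤ ε₂)
    (f : ℝ × ℝ → ℝ) (hfm : Measurable f)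
    (hf : ∀ x ∈ unitSquare, ε₁ ≤ f x ∧ f x ≤ ε₂)
    (hf1 : ∫ x in unitSquare, f x = 1)
    (r s : ℕ → ℝ) (Nc : ℕ → ℕ)
    (hr : ∀ n, 0 < r n) (hs : ∀ n, 0 < s n)
    (hint : ∀ n, ∃ k : ℕ, 1 - r n = k * (r n + s n))
    (z : ∀ n : ℕ, Fin (Nc n) → ℤ × ℤ)
    (hzinj : ∀ n, Function.Injective (z n))
    (city : ∀ n : ℕ, Fin (Nc n) → Set (ℝ × ℝ))
    (hcity : ∀ n l, city n l =
      square ((r n + s n) * ((z n l).1 : ℝ), (r n + s n) * ((z n l).2 : ℝ)) (r n))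
    (hsub : ∀ n l, city n l ⊆ unitSquare)
    (hconn : ∀ n, latticeConnected (Set.range (z n)))
    (X : (n : ℕ) → Fin n → Ω → ℝ × ℝ)
    (hXm : ∀ n i, Measurable (X n i))
    (hiid : ∀ n, iIndepFun (X n) Pr)
    (hlaw : ∀ n i, Measure.map (X n i) Pr =
      (volume.restrict (⋃ l, city n l)).withDensity
        fun x => ENNReal.ofReal (f x / ∫ y in (⋃ l, city n l), f y))
    (TSPC : (n : ℕ) → Ω → ℝ)
    (hTSPC : ∀ n ω, TSPC n ω = tspLength (Finset.univ.image fun i : Fin n => X n i ω))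
    (b : ℕ → ℝ) (hb : ∀ n, b n = r n * Real.sqrt ((n : ℝ) * (Nc n : ℝ)))
    (T : (n : ℕ) → Fin (Nc n) → Ω → ℝ)
    (hT : ∀ n l ω, T n l ω = tspLength
      ((Finset.univ.image fun i : Fin n => X n i ω).filter (fun p => p ∈ city n l)))
    (Ncount : (n : ℕ) → Fin (Nc n) → Ω → ℕ)
    (hNcount : ∀ n l ω, Ncount n l ω =
      (Finset.univ.filter fun i : Fin n => X n i ω ∈ city n l).card)
    (U : (n : ℕ) → Fin (Nc n) → Set Ω)
    (hU : ∀ n l, U n l = {ω |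
      ε₁ / ε₂ * n / (2 * Nc n) ≤ (Ncount n l ω : ℝ) ∧
      (Ncount n l ω : ℝ) ≤ 2 * (ε₂ / ε₁) * n / Nc n}) :
    ∀ M : ℝ, 0 < M →
      ((∀ n : ℕ, M * Real.log n / n ≤ r n ^ 2) ∧
        Tendsto (fun n : ℕ => (n : ℝ) / (Nc n : ℝ) ^ 2) atTop (nhds 0) ∧
        Tendsto (fun n : ℕ => (Nc n : ℝ) * s n / b n) atTop (nhds 0)) →
      ∀ n : ℕ, 8 ≤ ε₁ / ε₂ * n / (2 * Nc n) →
        ∀ᵐ ω ∂Pr, TSPC n ω ≤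
          if ω ∈ ⋂ l, U n l then
            (∑ l : Fin (Nc n), T n l ω) + 2 * (Nc n : ℝ) * (s n + 8 * r n)
          else 5 * Real.sqrt n :=
  tspc_upper_bound_by_city_sums_general Ω Pr ε₁ ε₂ f r s Nc hr hs z hzinj city hcity hsub hconn X
    hXm hlaw TSPC hTSPC b T hT Ncount hNcount U hU

end
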